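/- Let V be a real Hilbert space. Let a_ε : V × V → ℝ be bilinear, l_ε : V → ℝ linear, a₀ : V × V → ℝ bilinear, l₀ : V → ℝ linear, let u_ε, u₀, p_ε ∈ V, and let J_ε, J₀ : V → ℝ with J_ε Fréchet differentiable at u₀. Assume a_ε(u_ε, v) = l_ε(v) for all v ∈ V, a₀(u₀, v) = l₀(v) for all v ∈ V, and a_ε(φ, p_ε) = −DJ_ε(u₀)(φ) for all φ ∈ V. Then the following exact decomposition of the variation of the cost holds: J_ε(u_ε) − J₀(u₀) = (a_ε − a₀)(u₀, p_ε) − (l_ε − l₀)(p_ε) + [J_ε(u_ε) − J_ε(u₀) − DJ_ε(u₀)(u_ε − u₀)] + [J_ε(u₀) − J₀(u₀)]. -/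

import Mathlib

/-! The adjoint equation turns the linearised cost `DJ_ε(u_ε − u₀)` into
`a_ε(u₀, p_ε) − a_ε(u_ε, p_ε)`, and the two state equations tested with `p_ε` replace
`a_ε(u_ε, p_ε)` by `l_ε(p_ε)` and `a₀(u₀, p_ε)` by `l₀(p_ε)`; what remains is a ring identity. -/

theorem LinearMap.apply_sub_eq_of_adjoint {R M : Type*} [CommRing R] [AddCommGroup M]
    [Module R M] (a : M →ₗ[R] M →ₗ[R] R) (D : M →ₗ[R] R) {p : M}
    (hadj : ∀ φ : M, a φ p = -D φ) (u w : M) :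
    D (u - w) = a w p - a u p := by
  rw [map_sub, hadj u, hadj w]
  ring

theorem onoff_topderiv_stmt2_general
    {V : Type*} [NormedAddCommGroup V] [InnerProductSpace ℝ V]
    (aε a₀ : V →ₗ[ℝ] V →ₗ[ℝ] ℝ) (lε l₀ : V →ₗ[ℝ] ℝ)
    (uε u₀ pε : V) (Jε J₀ : V → ℝ) (DJε : V →L[ℝ] ℝ)
    (hstateε : ∀ v : V, aε uε v = lε v)
    (hstate₀ : ∀ v : V, a₀ u₀ v = l₀ v)
    (hadj : ∀ φ : V, aε φ pε = - DJε φ) :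
    Jε uε - J₀ u₀ =
      (aε u₀ pε - a₀ u₀ pε) - (lε pε - l₀ pε)
        + (Jε uε - Jε u₀ - DJε (uε - u₀)) + (Jε u₀ - J₀ u₀) := by
  have hlin : DJε (uε - u₀) = aε u₀ pε - aε uε pε :=
    LinearMap.apply_sub_eq_of_adjoint aε DJε.toLinearMap hadj uε u₀
  rw [hlin, hstateε pε, hstate₀ pε]
  ring

/-- Exact decomposition of the variation of the cost in Amstutz's adjoint method:
`J_ε(u_ε) − J₀(u₀) = (a_ε − a₀)(u₀, p_ε) − (l_ε − l₀)(p_ε)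
  + [J_ε(u_ε) − J_ε(u₀) − DJ_ε(u₀)(u_ε − u₀)] + [J_ε(u₀) − J₀(u₀)]`. -/
theorem onoff_topderiv_stmt2
    {V : Type*} [NormedAddCommGroup V] [InnerProductSpace ℝ V] [CompleteSpace V]
    (aε a₀ : V →ₗ[ℝ] V →ₗ[ℝ] ℝ) (lε l₀ : V →ₗ[ℝ] ℝ)
    (uε u₀ pε : V) (Jε J₀ : V → ℝ) (DJε : V →L[ℝ] ℝ)
    (hdiff : HasFDerivAt Jε DJε u₀)
    (hstateε : ∀ v : V, aε uε v = lε v)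
    (hstate₀ : ∀ v : V, a₀ u₀ v = l₀ v)
    (hadj : ∀ φ : V, aε φ pε = - DJε φ) :
    Jε uε - J₀ u₀ =
      (aε u₀ pε - a₀ u₀ pε) - (lε pε - l₀ pε)
        + (Jε uε - Jε u₀ - DJε (uε - u₀)) + (Jε u₀ - J₀ u₀) :=
  onoff_topderiv_stmt2_general aε a₀ lε l₀ uε u₀ pε Jε J₀ DJε hstateε hstate₀ hadj
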